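/- Let p > 2, a > 0 and b ≥ 0, and let f(s,t) = (a/p)(|s|^p + 2b|s|^{p/2}|t|^{p/2} + |t|^p). Then for all real s, t with s ≠ 0 and t ≠ 0, the determinant of the Hessian matrix of f at (s,t) equals a²(p−1)[ (p − 1 − b²) |s|^{p/2}|t|^{p/2} + (b/2)(p−2)( |s|^p + |t|^p ) ] |s|^{p/2−2}|t|^{p/2−2}. -/

import Mathlib

/-! Away from the coordinate axes, `|x| ^ r` is smooth with `(|x| ^ r)' = r |x| ^ (r - 2) x` and
`(|x| ^ r x)' = (r + 1) |x| ^ r`, so the gradient and then the Hessian of `f` can be computed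
termwise. Writing every power as `|s| ^ (p/2 - 2)` times a power of `s ^ 2` (and likewise for `t`)
turns the determinant identity into a polynomial identity. -/

open Filter Topology

lemma abs_rpow_eq_sq_rpow (x r : ℝ) : |x| ^ r = (x ^ 2) ^ (r / 2) := by
  rw [← sq_abs, ← Real.rpow_natCast, ← Real.rpow_mul (abs_nonneg x)]
  ring_nf

lemma abs_rpow_sub_two_mul_sq (r : ℝ) {x : ℝ} (hx : x ≠ 0) :
    |x| ^ (r - 2) * x ^ 2 = |x| ^ r := by
  rw [← sq_abs, ← Real.rpow_natCast, ← Real.rpow_add (abs_pos.2 hx)]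
  norm_num

lemma hasDerivAt_abs_rpow_of_ne_zero (r : ℝ) {x : ℝ} (hx : x ≠ 0) :
    HasDerivAt (fun y : ℝ => |y| ^ r) (r * |x| ^ (r - 2) * x) x := by
  have h := (hasDerivAt_pow 2 x).rpow_const (p := r / 2) (Or.inl (pow_ne_zero 2 hx))
  simp only [abs_rpow_eq_sq_rpow _ r, abs_rpow_eq_sq_rpow x (r - 2)]
  convert h using 1
  ring_nf

lemma hasDerivAt_abs_rpow_mul_self (r : ℝ) {x : ℝ} (hx : x ≠ 0) :
    HasDerivAt (fun y : ℝ => |y| ^ r * y) ((r + 1) * |x| ^ r) x := by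
  refine ((hasDerivAt_abs_rpow_of_ne_zero r hx).mul (hasDerivAt_id x)).congr_deriv ?_
  rw [← abs_rpow_sub_two_mul_sq r hx, id]
  ring

section Prod

variable {𝕜 : Type*} [NontriviallyNormedField 𝕜] {E : Type*} [NormedAddCommGroup E]
  [NormedSpace 𝕜 E] {u : 𝕜 → 𝕜} {u' : 𝕜}

lemma HasDerivAt.comp_fst {q : 𝕜 × E} (h : HasDerivAt u u' q.1) :
    HasFDerivAt (fun q : 𝕜 × E => u q.1) (u' • ContinuousLinearMap.fst 𝕜 𝕜 E) q :=
  h.comp_hasFDerivAt q hasFDerivAt_fst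

lemma HasDerivAt.comp_snd {q : E × 𝕜} (h : HasDerivAt u u' q.2) :
    HasFDerivAt (fun q : E × 𝕜 => u q.2) (u' • ContinuousLinearMap.snd 𝕜 E 𝕜) q :=
  h.comp_hasFDerivAt q hasFDerivAt_snd

end Prod

lemma fderiv_fderiv_apply_of_eventually_hasFDerivAt {f g₁ g₂ : ℝ × ℝ → ℝ} {x : ℝ × ℝ}
    {g₁' g₂' : ℝ × ℝ →L[ℝ] ℝ}
    (hf : ∀ᶠ q in 𝓝 x, HasFDerivAt f (g₁ q • ContinuousLinearMap.fst ℝ ℝ ℝ +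
      g₂ q • ContinuousLinearMap.snd ℝ ℝ ℝ) q)
    (hg₁ : HasFDerivAt g₁ g₁' x) (hg₂ : HasFDerivAt g₂ g₂' x) (v w : ℝ × ℝ) :
    fderiv ℝ (fderiv ℝ f) x v w = g₁' v * w.1 + g₂' v * w.2 := by
  have hDf : fderiv ℝ f =ᶠ[𝓝 x] fun q => g₁ q • ContinuousLinearMap.fst ℝ ℝ ℝ +
      g₂ q • ContinuousLinearMap.snd ℝ ℝ ℝ :=
    hf.mono fun q hq => hq.fderiv
  have hDDf : HasFDerivAt (fun q => g₁ q • ContinuousLinearMap.fst ℝ ℝ ℝ +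
      g₂ q • ContinuousLinearMap.snd ℝ ℝ ℝ) _ x :=
    (hg₁.smul_const (ContinuousLinearMap.fst ℝ ℝ ℝ)).add
      (hg₂.smul_const (ContinuousLinearMap.snd ℝ ℝ ℝ))
  rw [hDf.fderiv_eq, hDDf.fderiv]
  simp

section CoupledPower

variable (p a b : ℝ)

noncomputable def coupledPower (q : ℝ × ℝ) : ℝ :=
  (a / p) * (|q.1| ^ p + 2 * b * |q.1| ^ (p / 2) * |q.2| ^ (p / 2) + |q.2| ^ p)

/-- `∂₁ coupledPower` at `(x, y)`; by symmetry `∂₂ coupledPower` at `(x, y)` is its value at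
`(y, x)`. -/
noncomputable def coupledPowerPartial (x y : ℝ) : ℝ :=
  a * (|x| ^ (p - 2) * x + b * (|x| ^ (p / 2 - 2) * x) * |y| ^ (p / 2))

noncomputable def coupledPowerPartial₁₁ (x y : ℝ) : ℝ :=
  a * ((p - 1) * |x| ^ (p - 2) + b * (p / 2 - 1) * |x| ^ (p / 2 - 2) * |y| ^ (p / 2))

noncomputable def coupledPowerPartial₁₂ (x y : ℝ) : ℝ :=
  a * b * (p / 2) * (|x| ^ (p / 2 - 2) * x) * (|y| ^ (p / 2 - 2) * y)

lemma hasFDerivAt_coupledPower (hp : p ≠ 0) {q : ℝ × ℝ} (h₁ : q.1 ≠ 0) (h₂ : q.2 ≠ 0) :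
    HasFDerivAt (coupledPower p a b)
      (coupledPowerPartial p a b q.1 q.2 • ContinuousLinearMap.fst ℝ ℝ ℝ +
        coupledPowerPartial p a b q.2 q.1 • ContinuousLinearMap.snd ℝ ℝ ℝ) q := by
  have hx := (hasDerivAt_abs_rpow_of_ne_zero p h₁).comp_fst (E := ℝ)
  have hx' := (hasDerivAt_abs_rpow_of_ne_zero (p / 2) h₁).comp_fst (E := ℝ)
  have hy := (hasDerivAt_abs_rpow_of_ne_zero p h₂).comp_snd (E := ℝ)
  have hy' := (hasDerivAt_abs_rpow_of_ne_zero (p / 2) h₂).comp_snd (E := ℝ)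
  have h := ((hx.add ((hx'.mul hy').const_mul (2 * b))).add hy).const_mul (a / p)
  refine (h.congr_fderiv ?_).congr_of_eventuallyEq (.of_forall fun q => ?_)
  · ext <;> simp [coupledPowerPartial] <;> field_simp; ring
  · simp only [coupledPower, Pi.add_apply, Pi.mul_apply]
    ring

lemma hasFDerivAt_coupledPowerPartial {x y : ℝ} (hx : x ≠ 0) (hy : y ≠ 0) :
    HasFDerivAt (fun q : ℝ × ℝ => coupledPowerPartial p a b q.1 q.2)
      (coupledPowerPartial₁₁ p a b x y • ContinuousLinearMap.fst ℝ ℝ ℝ +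
        coupledPowerPartial₁₂ p a b x y • ContinuousLinearMap.snd ℝ ℝ ℝ) (x, y) := by
  have h₁ := (hasDerivAt_abs_rpow_mul_self (p - 2) hx).comp_fst (E := ℝ) (q := (x, y))
  have h₂ := (hasDerivAt_abs_rpow_mul_self (p / 2 - 2) hx).comp_fst (E := ℝ) (q := (x, y))
  have h₃ := (hasDerivAt_abs_rpow_of_ne_zero (p / 2) hy).comp_snd (E := ℝ) (q := (x, y))
  have h := (h₁.add ((h₂.mul h₃).const_mul b)).const_mul a
  refine (h.congr_fderiv ?_).congr_of_eventuallyEq (.of_forall fun q => ?_)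
  · ext <;> simp [coupledPowerPartial₁₁, coupledPowerPartial₁₂] <;> ring
  · simp [coupledPowerPartial, mul_assoc]

lemma hasFDerivAt_coupledPowerPartial_swap {x y : ℝ} (hx : x ≠ 0) (hy : y ≠ 0) :
    HasFDerivAt (fun q : ℝ × ℝ => coupledPowerPartial p a b q.2 q.1)
      (coupledPowerPartial₁₂ p a b y x • ContinuousLinearMap.fst ℝ ℝ ℝ +
        coupledPowerPartial₁₁ p a b y x • ContinuousLinearMap.snd ℝ ℝ ℝ) (x, y) := by
  refine ((hasFDerivAt_coupledPowerPartial p a b hy hx).comp (x, y)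
    (ContinuousLinearEquiv.prodComm ℝ ℝ ℝ).hasFDerivAt).congr_fderiv ?_
  ext <;> simp

lemma coupledPowerPartial₁₁_mul_sub_coupledPowerPartial₁₂_mul {s t : ℝ} (hs : s ≠ 0)
    (ht : t ≠ 0) :
    coupledPowerPartial₁₁ p a b s t * coupledPowerPartial₁₁ p a b t s -
        coupledPowerPartial₁₂ p a b t s * coupledPowerPartial₁₂ p a b s t =
      a ^ 2 * (p - 1) *
        ((p - 1 - b ^ 2) * |s| ^ (p / 2) * |t| ^ (p / 2) +
          (b / 2) * (p - 2) * (|s| ^ p + |t| ^ p)) *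
        (|s| ^ (p / 2 - 2) * |t| ^ (p / 2 - 2)) := by
  have split : ∀ {x : ℝ}, x ≠ 0 → |x| ^ (p / 2) = |x| ^ (p / 2 - 2) * x ^ 2 ∧
      |x| ^ (p - 2) = |x| ^ (p / 2 - 2) * |x| ^ (p / 2) ∧
      |x| ^ p = |x| ^ (p / 2) * |x| ^ (p / 2) := fun {x} hx =>
    ⟨(abs_rpow_sub_two_mul_sq _ hx).symm,
      by rw [← Real.rpow_add (abs_pos.2 hx)]; ring_nf,
      by rw [← Real.rpow_add (abs_pos.2 hx)]; ring_nf⟩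
  obtain ⟨hs₁, hs₂, hs₃⟩ := split hs
  obtain ⟨ht₁, ht₂, ht₃⟩ := split ht
  simp only [coupledPowerPartial₁₁, coupledPowerPartial₁₂]
  rw [hs₂, ht₂, hs₃, ht₃, hs₁, ht₁]
  ring

end CoupledPower

theorem stmt_17_general (p a b : ℝ) (hp : 2 < p)
    (f : ℝ × ℝ → ℝ)
    (hf : ∀ q : ℝ × ℝ,
      f q = (a / p) * (|q.1| ^ p + 2 * b * |q.1| ^ (p / 2) * |q.2| ^ (p / 2) + |q.2| ^ p))
    (s t : ℝ) (hs : s ≠ 0) (ht : t ≠ 0) :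
    fderiv ℝ (fderiv ℝ f) (s, t) (1, 0) (1, 0) * fderiv ℝ (fderiv ℝ f) (s, t) (0, 1) (0, 1) -
        fderiv ℝ (fderiv ℝ f) (s, t) (1, 0) (0, 1) * fderiv ℝ (fderiv ℝ f) (s, t) (0, 1) (1, 0) =
      a ^ 2 * (p - 1) *
        ((p - 1 - b ^ 2) * |s| ^ (p / 2) * |t| ^ (p / 2) +
          (b / 2) * (p - 2) * (|s| ^ p + |t| ^ p)) *
        (|s| ^ (p / 2 - 2) * |t| ^ (p / 2 - 2)) := by
  obtain rfl : f = coupledPower p a b := funext hf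
  have hoff_axes : ∀ᶠ q : ℝ × ℝ in 𝓝 (s, t), q.1 ≠ 0 ∧ q.2 ≠ 0 :=
    (continuous_fst.continuousAt.eventually_ne hs).and
      (continuous_snd.continuousAt.eventually_ne ht)
  have hessian := fderiv_fderiv_apply_of_eventually_hasFDerivAt
    (hoff_axes.mono fun q hq => hasFDerivAt_coupledPower p a b (by linarith) hq.1 hq.2)
    (hasFDerivAt_coupledPowerPartial p a b hs ht)
    (hasFDerivAt_coupledPowerPartial_swap p a b hs ht)
  simp only [hessian]
  simpa using coupledPowerPartial₁₁_mul_sub_coupledPowerPartial₁₂_mul p a b hs ht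

/-- for `p > 2`, `a > 0`, `b ≥ 0` and `s ≠ 0`, `t ≠ 0`, the determinant of the
Hessian of `f(s,t) = (a/p)(|s|^p + 2b|s|^(p/2)|t|^(p/2) + |t|^p)` at `(s,t)` equals
`a²(p-1)[(p-1-b²)|s|^(p/2)|t|^(p/2) + (b/2)(p-2)(|s|^p + |t|^p)] |s|^(p/2-2)|t|^(p/2-2)`. -/
theorem stmt_17 (p a b : ℝ) (hp : 2 < p) (ha : 0 < a) (hb : 0 ≤ b)
    (f : ℝ × ℝ → ℝ)
    (hf : ∀ q : ℝ × ℝ,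
      f q = (a / p) * (|q.1| ^ p + 2 * b * |q.1| ^ (p / 2) * |q.2| ^ (p / 2) + |q.2| ^ p))
    (s t : ℝ) (hs : s ≠ 0) (ht : t ≠ 0) :
    fderiv ℝ (fderiv ℝ f) (s, t) (1, 0) (1, 0) * fderiv ℝ (fderiv ℝ f) (s, t) (0, 1) (0, 1) -
        fderiv ℝ (fderiv ℝ f) (s, t) (1, 0) (0, 1) * fderiv ℝ (fderiv ℝ f) (s, t) (0, 1) (1, 0) =
      a ^ 2 * (p - 1) *
        ((p - 1 - b ^ 2) * |s| ^ (p / 2) * |t| ^ (p / 2) +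
          (b / 2) * (p - 2) * (|s| ^ p + |t| ^ p)) *
        (|s| ^ (p / 2 - 2) * |t| ^ (p / 2 - 2)) :=
  stmt_17_general p a b hp f hf s t hs ht
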